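/- arXiv:0708.2887 — 2 statements merged into one kernel-verified Lean document; each statement's English description precedes it below -/
import Mathlib

section
/- Let Φ_j be a sequence of injective holomorphic maps (automorphisms of ℂⁿ) and suppose that for each j, sup_{x ∈ L_j} |Φ_{j+1}∘Φ_j^{-1}(x) − x| < ε_j where L_j ⊃ B(0,j) and Σ ε_j < ∞ with ε_j < dist(B(0,j), ∂B(0,j+1))/2 suitably controlled. Then the sequence Φ_j converges locally uniformly on the open set Ω = ⋃_j Φ_j^{-1}(B(0,j)) to a holomorphic map Φ : Ω → ℂⁿ, and Φ is injective on Ω. -/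
/-!
On `Φ k ⁻¹' ball 0 k` consecutive maps differ by less than `2⁻ᵏ`; hence these sets increase
with `k` and `Φ k` converges on each of them uniformly and geometrically fast. Uniform limits of
holomorphic maps are holomorphic, since by the Cauchy estimates the derivatives converge
uniformly as well. For injectivity, if `Φ∞` is the limit then `Φ∞ ∘ Ψ k` moves points of
`ball 0 k` by at most `2`, and by the Schwarz lemma such a perturbation of the identity is
injective on balls of radius much smaller than `k`; meanwhile `Φ k` maps each fixed
`Φ j ⁻¹' ball 0 j` into `ball 0 (j + 4)`.
-/

open Set Metric Filter Topology

section SmallSteps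

variable {X E : Type*} [NormedAddCommGroup E]

/-- The condition `‖φₖ₊₁ y - y‖ < 2⁻ᵏ` on `ball 0 k` for `φₖ₊₁ = Φ (k + 1) ∘ (Φ k)⁻¹`, written at
`y = Φ k x` so that no inverse is needed. -/
def SmallStepsOnBalls (Φ : ℕ → X → E) : Prop :=
  ∀ k, ∀ x ∈ Φ k ⁻¹' ball 0 k, ‖Φ (k + 1) x - Φ k x‖ < 1 / 2 ^ k

noncomputable def pointwiseLim (Φ : ℕ → X → E) (x : X) : E :=
  limUnder atTop (Φ · x)

namespace SmallStepsOnBalls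

variable {Φ : ℕ → X → E} {x : X} {j k : ℕ}

theorem preimage_ball_subset_succ (h : SmallStepsOnBalls Φ) (k : ℕ) :
    Φ k ⁻¹' ball 0 k ⊆ Φ (k + 1) ⁻¹' ball 0 (k + 1 : ℕ) := by
  intro x hx
  have hstep : (1 : ℝ) / 2 ^ k ≤ 1 := (div_le_one (by positivity)).2 (one_le_pow₀ one_le_two)
  have hclose := h k x hx
  rw [mem_preimage, mem_ball_zero_iff] at hx ⊢
  push_cast
  linarith [norm_le_insert' (Φ (k + 1) x) (Φ k x)]

theorem monotone_preimage_ball (h : SmallStepsOnBalls Φ) :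
    Monotone fun k => Φ k ⁻¹' ball (0 : E) k :=
  monotone_nat_of_le_succ h.preimage_ball_subset_succ

-- The bound has the shape `C / 2 / 2 ^ m` of `cauchySeq_of_le_geometric_two`, with `C = 2 / 2 ^ j`.
theorem dist_succ_le (h : SmallStepsOnBalls Φ) (hx : x ∈ Φ j ⁻¹' ball 0 j) (m : ℕ) :
    dist (Φ (m + j) x) (Φ (m + 1 + j) x) ≤ 2 / 2 ^ j / 2 / 2 ^ m := by
  have hmem : x ∈ Φ (m + j) ⁻¹' ball 0 (m + j : ℕ) :=
    h.monotone_preimage_ball (Nat.le_add_left j m) hx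
  rw [dist_comm, dist_eq_norm, add_right_comm]
  calc ‖Φ (m + j + 1) x - Φ (m + j) x‖ ≤ 1 / 2 ^ (m + j) := (h _ x hmem).le
    _ = 2 / 2 ^ j / 2 / 2 ^ m := by rw [pow_add]; field_simp

variable [CompleteSpace E]

theorem tendsto_pointwiseLim (h : SmallStepsOnBalls Φ) (hx : x ∈ Φ j ⁻¹' ball 0 j) :
    Tendsto (Φ · x) atTop (𝓝 (pointwiseLim Φ x)) := by
  obtain ⟨a, ha⟩ :=
    cauchySeq_tendsto_of_complete (cauchySeq_of_le_geometric_two (h.dist_succ_le hx))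
  exact tendsto_nhds_limUnder ⟨a, (tendsto_add_atTop_iff_nat j).1 ha⟩

theorem dist_pointwiseLim_le (h : SmallStepsOnBalls Φ) (hx : x ∈ Φ j ⁻¹' ball 0 j)
    (hjk : j ≤ k) :
    dist (Φ k x) (pointwiseLim Φ x) ≤ 2 / 2 ^ k := by
  obtain ⟨m, rfl⟩ := Nat.exists_eq_add_of_le' hjk
  have := dist_le_of_le_geometric_two_of_tendsto (h.dist_succ_le hx)
    ((h.tendsto_pointwiseLim hx).comp (tendsto_add_atTop_nat j)) m
  rwa [div_div, ← pow_add, add_comm j] at this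

theorem tendstoUniformlyOn (h : SmallStepsOnBalls Φ) (j : ℕ) :
    TendstoUniformlyOn Φ (pointwiseLim Φ) atTop (Φ j ⁻¹' ball 0 j) := by
  rw [Metric.tendstoUniformlyOn_iff]
  intro δ hδ
  have hgeom : Tendsto (fun k : ℕ => (2 : ℝ) / 2 ^ k) atTop (𝓝 0) := by
    simpa [div_eq_mul_inv] using
      (tendsto_pow_atTop_nhds_zero_of_lt_one (by norm_num : (0 : ℝ) ≤ 2⁻¹)
        (by norm_num)).const_mul 2
  filter_upwards [hgeom.eventually_lt_const hδ, eventually_ge_atTop j] with k hsmall hjk x hx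
  rw [dist_comm]
  exact (h.dist_pointwiseLim_le hx hjk).trans_lt hsmall

theorem norm_lt_of_mem (h : SmallStepsOnBalls Φ) (hx : x ∈ Φ j ⁻¹' ball 0 j) (hjk : j ≤ k) :
    ‖Φ k x‖ < j + 4 := by
  have htwo : ∀ i : ℕ, (2 : ℝ) / 2 ^ i ≤ 2 := fun i =>
    div_le_self zero_le_two (one_le_pow₀ one_le_two)
  have hk := h.dist_pointwiseLim_le hx hjk
  have hj := h.dist_pointwiseLim_le hx le_rfl
  have hxj : ‖Φ j x‖ < j := mem_ball_zero_iff.1 hx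
  linarith [norm_le_insert' (Φ k x) (Φ j x), dist_eq_norm (Φ k x) (Φ j x),
    dist_triangle_right (Φ k x) (Φ j x) (pointwiseLim Φ x), htwo k, htwo j]

end SmallStepsOnBalls

end SmallSteps

theorem mapsTo_closedBall_two_mul {α F : Type*} [SeminormedAddCommGroup F] {h : α → F}
    {s : Set α} {c : α} {M : ℝ}
    (hM : ∀ w ∈ s, ‖h w‖ ≤ M) (hc : c ∈ s) : MapsTo h s (closedBall (h c) (2 * M)) :=
  fun w hw => by
    rw [mem_closedBall, dist_eq_norm]
    linarith [norm_sub_le (h w) (h c), hM w hw, hM c hc]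

section Holomorphic

variable {E F : Type*} [NormedAddCommGroup E] [NormedSpace ℂ E]
  [NormedAddCommGroup F] [NormedSpace ℂ F]

theorem norm_fderiv_le_of_forall_norm_le {h : E → F} {c : E} {R M : ℝ}
    (hd : DifferentiableOn ℂ h (ball c R)) (hR : 0 < R) (hM : ∀ w ∈ ball c R, ‖h w‖ ≤ M) :
    ‖fderiv ℂ h c‖ ≤ 2 * M / R :=
  Complex.norm_fderiv_le_div_of_mapsTo_ball hd (mapsTo_closedBall_two_mul hM (mem_ball_self hR)) hR

theorem uniformCauchySeqOn_fderiv_of_tendstoUniformlyOn {G : ℕ → E → F} {g : E → F} {c : E}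
    {r : ℝ} (hr : 0 < r) (hG : ∀ n, DifferentiableOn ℂ (G n) (ball c r))
    (hg : TendstoUniformlyOn G g atTop (ball c r)) :
    UniformCauchySeqOn (fun n => fderiv ℂ (G n)) atTop (ball c (r / 2)) := by
  rw [Metric.uniformCauchySeqOn_iff]
  intro η hη
  obtain ⟨N, hN⟩ :=
    Metric.uniformCauchySeqOn_iff.1 hg.uniformCauchySeqOn (η * r / 8) (by positivity)
  refine ⟨N, fun m hm p hp z hz => ?_⟩
  have hsub : ball z (r / 2) ⊆ ball c r :=
    ball_subset_ball' (by linarith [mem_ball.1 hz])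
  have hdiff : ∀ n, DifferentiableAt ℂ (G n) z := fun n =>
    (hG n).differentiableAt (isOpen_ball.mem_nhds (hsub (mem_ball_self (half_pos hr))))
  have hbound := norm_fderiv_le_of_forall_norm_le (((hG m).sub (hG p)).mono hsub) (half_pos hr)
    fun w hw => by simpa only [Pi.sub_apply, ← dist_eq_norm] using (hN m hm p hp w (hsub hw)).le
  rw [fderiv_sub (hdiff m) (hdiff p)] at hbound
  rw [dist_eq_norm]
  calc _ ≤ 2 * (η * r / 8) / (r / 2) := hbound
    _ = η / 2 := by field_simp; ring
    _ < η := half_lt_self hη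

theorem differentiableAt_of_tendstoUniformlyOn_ball [CompleteSpace F] {G : ℕ → E → F}
    {g : E → F} {c : E} {r : ℝ} (hr : 0 < r) (hG : ∀ n, DifferentiableOn ℂ (G n) (ball c r))
    (hg : TendstoUniformlyOn G g atTop (ball c r)) : DifferentiableAt ℂ g c := by
  have hG' := uniformCauchySeqOn_fderiv_of_tendstoUniformlyOn hr hG hg
  have hsub : ball c (r / 2) ⊆ ball c r := ball_subset_ball (by linarith)
  have hlim := hG'.tendstoUniformlyOn_of_tendsto
    (f := fun z => limUnder atTop fun n => fderiv ℂ (G n) z)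
    fun z hz => tendsto_nhds_limUnder (cauchySeq_tendsto_of_complete (hG'.cauchySeq hz))
  refine (hasFDerivAt_of_tendstoUniformlyOn isOpen_ball hlim (fun n z hz => ?_)
    (fun z hz => hg.tendsto_at (hsub hz)) (mem_ball_self (half_pos hr))).differentiableAt
  exact ((hG n).differentiableAt (isOpen_ball.mem_nhds (hsub hz))).hasFDerivAt

theorem TendstoUniformlyOn.differentiableOn_of_isOpen [CompleteSpace F] {G : ℕ → E → F}
    {g : E → F} {U : Set E} (hg : TendstoUniformlyOn G g atTop U)
    (hG : ∀ n, DifferentiableOn ℂ (G n) U) (hU : IsOpen U) : DifferentiableOn ℂ g U := by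
  intro x hx
  obtain ⟨r, hr, hball⟩ := Metric.isOpen_iff.1 hU x hx
  exact (differentiableAt_of_tendstoUniformlyOn_ball hr (fun n => (hG n).mono hball)
    (hg.mono hball)).differentiableWithinAt

theorem eq_of_add_eq_add_of_norm_le {g : E → E} {c z : E} {R M : ℝ}
    (hg : DifferentiableOn ℂ g (ball c R)) (hM : ∀ w ∈ ball c R, ‖g w‖ ≤ M) (hMR : 2 * M < R)
    (hz : z ∈ ball c R) (h : z + g z = c + g c) : z = c := by
  have hR : 0 < R := nonempty_ball.1 ⟨z, hz⟩
  have hdist : dist (g z) (g c) = dist z c := by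
    rw [dist_eq_norm, dist_eq_norm, ← norm_neg, neg_sub]
    congr 1
    rw [sub_eq_sub_iff_add_eq_add, add_comm, h, add_comm]
  have hlip := Complex.dist_le_div_mul_dist_of_mapsTo_ball hg
    (mapsTo_closedBall_two_mul hM (mem_ball_self hR)) hz
  rw [hdist] at hlip
  have hθ : 2 * M / R < 1 := (div_lt_one hR).2 hMR
  exact dist_le_zero.1 (by nlinarith [dist_nonneg (x := z) (y := c)])

end Holomorphic

namespace SmallStepsOnBalls

variable {X E : Type*} [NormedAddCommGroup X] [NormedSpace ℂ X]
  [NormedAddCommGroup E] [NormedSpace ℂ E] [CompleteSpace E]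

theorem differentiableOn_pointwiseLim {Φ : ℕ → X → E} (h : SmallStepsOnBalls Φ)
    (hΦ : ∀ k, Differentiable ℂ (Φ k)) (j : ℕ) :
    DifferentiableOn ℂ (pointwiseLim Φ) (Φ j ⁻¹' ball 0 j) :=
  (h.tendstoUniformlyOn j).differentiableOn_of_isOpen (fun k => (hΦ k).differentiableOn)
    (isOpen_ball.preimage (hΦ j).continuous)

theorem injOn_pointwiseLim {Φ Ψ : ℕ → E → E} (h : SmallStepsOnBalls Φ)
    (hΦ : ∀ k, Differentiable ℂ (Φ k)) (hΨ : ∀ k, Differentiable ℂ (Ψ k))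
    (hΨΦ : ∀ k, Function.LeftInverse (Ψ k) (Φ k)) (hΦΨ : ∀ k, Function.RightInverse (Ψ k) (Φ k)) :
    InjOn (pointwiseLim Φ) (⋃ j, Φ j ⁻¹' ball 0 j) := by
  intro x hx y hy hxy
  obtain ⟨jx, hjx⟩ := mem_iUnion.1 hx
  obtain ⟨jy, hjy⟩ := mem_iUnion.1 hy
  set j := max jx jy
  have hxj := h.monotone_preimage_ball (le_max_left jx jy) hjx
  have hyj := h.monotone_preimage_ball (le_max_right jx jy) hjy
  -- On `ball (Φ k x) (2 * j + 9) ⊆ ball 0 k` the bound `‖g‖ ≤ 2` makes the Schwarz lemma apply,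
  -- and `Φ k y` lies in that ball since both points stay in `ball 0 (j + 4)`.
  set k := 3 * j + 13
  set g : E → E := fun w => pointwiseLim Φ (Ψ k w) - w
  have hΨmem : MapsTo (Ψ k) (ball 0 k) (Φ k ⁻¹' ball 0 k) := fun w hw => by
    rwa [mem_preimage, hΦΨ k w]
  have hg : DifferentiableOn ℂ g (ball 0 k) :=
    ((h.differentiableOn_pointwiseLim hΦ k).comp (hΨ k).differentiableOn hΨmem).sub
      differentiableOn_id
  have hgM : ∀ w ∈ ball (0 : E) k, ‖g w‖ ≤ 2 := fun w hw => by
    have := h.dist_pointwiseLim_le (hΨmem hw) le_rfl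
    rw [hΦΨ k w, dist_comm, dist_eq_norm] at this
    exact this.trans (div_le_self zero_le_two (one_le_pow₀ one_le_two))
  have hx' := h.norm_lt_of_mem hxj (by omega : j ≤ k)
  have hy' := h.norm_lt_of_mem hyj (by omega : j ≤ k)
  have hball : ball (Φ k x) (2 * j + 9) ⊆ ball 0 k := ball_subset_ball' <| by
    rw [dist_zero_right]; push_cast [k]; linarith
  have hmem : Φ k y ∈ ball (Φ k x) (2 * j + 9) := by
    rw [mem_ball, dist_eq_norm]; linarith [norm_sub_le (Φ k y) (Φ k x)]
  have heq : Φ k y + g (Φ k y) = Φ k x + g (Φ k x) := by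
    simp only [g, hΨΦ k x, hΨΦ k y, add_sub_cancel, hxy]
  have hyx := eq_of_add_eq_add_of_norm_le (hg.mono hball) (fun w hw => hgM w (hball hw))
    (by linarith [j.cast_nonneg (α := ℝ)]) hmem heq
  exact ((hΨΦ k).injective hyx).symm

end SmallStepsOnBalls

theorem stmt16_general (n : ℕ) (Φ Ψ : ℕ → (Fin n → ℂ) → (Fin n → ℂ))
    (hΦhol : ∀ j, Differentiable ℂ (Φ j)) (hΨhol : ∀ j, Differentiable ℂ (Ψ j))
    (hinv₁ : ∀ j, Function.LeftInverse (Ψ j) (Φ j))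
    (hinv₂ : ∀ j, Function.RightInverse (Ψ j) (Φ j))
    (L : ℕ → Set (Fin n → ℂ)) (hL : ∀ j : ℕ, Metric.ball (0 : Fin n → ℂ) (j : ℝ) ⊆ L j)
    (ε : ℕ → ℝ)
    (hsmall : ∀ j, ε j < 1 / 2 ^ j)
    (hclose : ∀ j, ∀ x ∈ L j, ‖Φ (j + 1) (Ψ j x) - x‖ < ε j) :
    let Ω := ⋃ j, (Φ j) ⁻¹' Metric.ball 0 (j : ℝ)
    IsOpen Ω ∧ ∃ Φlim : (Fin n → ℂ) → (Fin n → ℂ),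
      TendstoLocallyUniformlyOn Φ Φlim atTop Ω ∧
      DifferentiableOn ℂ Φlim Ω ∧ Set.InjOn Φlim Ω := by
  intro Ω
  have hsteps : SmallStepsOnBalls Φ := fun k x hx => by
    simpa only [hinv₁ k x] using (hclose k _ (hL k hx)).trans (hsmall k)
  have hopen : ∀ j, IsOpen (Φ j ⁻¹' ball 0 j) := fun j =>
    isOpen_ball.preimage (hΦhol j).continuous
  refine ⟨isOpen_iUnion hopen, pointwiseLim Φ,
    tendstoLocallyUniformlyOn_iUnion hopen fun j =>
      (hsteps.tendstoUniformlyOn j).tendstoLocallyUniformlyOn,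
    fun x hx => ?_, hsteps.injOn_pointwiseLim hΦhol hΨhol hinv₁ hinv₂⟩
  obtain ⟨j, hj⟩ := mem_iUnion.1 hx
  exact ((hsteps.differentiableOn_pointwiseLim hΦhol j).differentiableAt
    ((hopen j).mem_nhds hj)).differentiableWithinAt

/-- Convergence lemma for compositions of automorphisms of `ℂⁿ` close
to the identity on increasing balls: if `Φⱼ` are holomorphic automorphisms (with
holomorphic inverses `Ψⱼ`), `φ_{j+1} = Φ_{j+1} ∘ Φⱼ⁻¹` satisfies `|φ_{j+1}(x) − x| < εⱼ`
on `Lⱼ ⊇ B(0,j)`, with `Σ εⱼ < ∞` and `εⱼ < 2⁻ʲ`, then `Φⱼ` converges locally uniformly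
on `Ω = ⋃ⱼ Φⱼ⁻¹(B(0,j))` to a holomorphic map `Φ`, injective on `Ω`, and `Ω` is open. -/
theorem stmt16 (n : ℕ) (Φ Ψ : ℕ → (Fin n → ℂ) → (Fin n → ℂ))
    (hΦhol : ∀ j, Differentiable ℂ (Φ j)) (hΨhol : ∀ j, Differentiable ℂ (Ψ j))
    (hinv₁ : ∀ j, Function.LeftInverse (Ψ j) (Φ j))
    (hinv₂ : ∀ j, Function.RightInverse (Ψ j) (Φ j))
    (L : ℕ → Set (Fin n → ℂ)) (hL : ∀ j : ℕ, Metric.ball (0 : Fin n → ℂ) (j : ℝ) ⊆ L j)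
    (ε : ℕ → ℝ) (hε : ∀ j, 0 < ε j) (hsum : Summable ε)
    (hsmall : ∀ j, ε j < 1 / 2 ^ j)
    (hclose : ∀ j, ∀ x ∈ L j, ‖Φ (j + 1) (Ψ j x) - x‖ < ε j) :
    let Ω := ⋃ j, (Φ j) ⁻¹' Metric.ball 0 (j : ℝ)
    IsOpen Ω ∧ ∃ Φlim : (Fin n → ℂ) → (Fin n → ℂ),
      TendstoLocallyUniformlyOn Φ Φlim atTop Ω ∧
      DifferentiableOn ℂ Φlim Ω ∧ Set.InjOn Φlim Ω :=
  stmt16_general n Φ Ψ hΦhol hΨhol hinv₁ hinv₂ L hL ε hsmall hclose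
end

section
/- Let G = {ρ < 0} be a smoothly bounded simply connected domain in ℂ with a ∈ ∂G, and let D be a smoothly bounded domain with a ∈ ∂D such that −ρ(z) ≥ c·dist(z,a)² for all z ∈ ∂D near a (G osculates D from outside to second order at a). If β(z) = z + M z^N + O(z^{N+1}) (in a local coordinate with a = 0) is holomorphic near a with N > 2 and |M| and the remainder sufficiently small, then β maps D̄ ∩ U₁ into G ∪ {a} for a sufficiently small neighborhood U₁ of a. -/
/-!
Near `a = 0` every point `z ≠ 0` of `D̄` lies at distance at least `ε ‖z‖²` from the complement
of `G`: a point `w` with `ρ w ≥ 0` close to `z` lies outside `D̄`, so the segment `[z, w]` crosses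
`∂D` at some `p` with `‖p‖ ≍ ‖z‖`, where `-ρ p ≥ c ‖p‖²`, and since `ρ` is Lipschitz near `0`
this forces `‖z - w‖ ≳ ‖z‖²`. A map `β` with `β z - z = O(‖z‖^N)`, `N ≥ 3`, moves `z` by
`O(‖z‖³) = o(‖z‖²)`, so `β z ∈ G` for small `z ≠ 0`, while `β 0 = 0`.
-/

open Set Metric

theorem IsPreconnected.inter_frontier_nonempty {α : Type*} [TopologicalSpace α] {s t : Set α}
    (hs : IsPreconnected s) (hst : (s ∩ t).Nonempty) (hsdt : (s \ t).Nonempty) :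
    (s ∩ frontier t).Nonempty := by
  rw [frontier_eq_closure_inter_closure]
  refine isPreconnected_closed_iff.mp hs _ _ isClosed_closure isClosed_closure
    (fun x _ => ?_) (hst.mono (inter_subset_inter_right s subset_closure))
    (hsdt.mono (inter_subset_inter_right s subset_closure))
  by_cases hx : x ∈ t
  exacts [Or.inl (subset_closure hx), Or.inr (subset_closure hx)]

section Osculation

variable {E : Type*} [NormedAddCommGroup E] [NormedSpace ℝ E]

theorem exists_mem_segment_mem_frontier {s : Set E} {z w : E} (hz : z ∈ closure s)
    (hw : w ∉ closure s) : ∃ p ∈ segment ℝ z w, p ∈ frontier s := by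
  obtain ⟨p, hp, hpf⟩ := (convex_segment z w).isPreconnected.inter_frontier_nonempty
    ⟨z, left_mem_segment ℝ z w, hz⟩ ⟨w, right_mem_segment ℝ z w, hw⟩
  exact ⟨p, hp, frontier_closure_subset hpf⟩

variable {D : Set E} {ρ : E → ℝ} {c : ℝ}

/- The segment from `z` to `w` leaves `D̄` through a boundary point `p` with `‖p‖ ≥ ‖z‖ / 2`,
where `-ρ p ≥ c ‖z‖² / 4` while `ρ w ≥ 0`; the Lipschitz bound turns this gap in `ρ`
into a lower bound for `‖w - p‖ ≤ ‖z - w‖`. -/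
theorem mul_norm_sq_le_mul_norm_sub_of_osculating {r : ℝ} {L : NNReal} {z w : E} (hc : 0 ≤ c) (hρ : LipschitzOnWith L ρ (ball 0 r))
    (hosc : ∀ p ∈ frontier D, ‖p‖ < r → c * ‖p‖ ^ 2 ≤ -ρ p)
    (hDG : ∀ z ∈ closure D, ‖z‖ < r → ρ z < 0 ∨ z = 0)
    (hz : z ∈ closure D) (hzr : 3 * ‖z‖ < 2 * r) (hw : 0 ≤ ρ w) (hzw : ‖z - w‖ < ‖z‖ / 2) :
    c * ‖z‖ ^ 2 ≤ 4 * L * ‖z - w‖ := by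
  have hw_norm : ‖w‖ < r := by linarith [norm_le_norm_add_norm_sub z w]
  have hwD : w ∉ closure D := by
    intro hwD
    rcases hDG w hwD hw_norm with hρw | rfl
    · exact (not_lt.mpr hw) hρw
    · rw [sub_zero] at hzw
      linarith [norm_nonneg z]
  obtain ⟨p, hp, hpD⟩ := exists_mem_segment_mem_frontier hz hwD
  have hsplit := dist_add_dist_of_mem_segment hp
  simp only [dist_eq_norm] at hsplit
  have hzp : ‖z‖ / 2 ≤ ‖p‖ := by
    linarith [norm_le_norm_add_norm_sub' z p, norm_nonneg (p - w)]
  have hp_norm : ‖p‖ < r := by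
    linarith [norm_le_norm_add_norm_sub z p, norm_nonneg (p - w)]
  have hlip : ρ w - ρ p ≤ L * ‖w - p‖ := by
    have := hρ.dist_le_mul w (mem_ball_zero_iff.mpr hw_norm) p (mem_ball_zero_iff.mpr hp_norm)
    rw [Real.dist_eq, dist_eq_norm] at this
    exact (le_abs_self _).trans this
  calc c * ‖z‖ ^ 2 = 4 * (c * (‖z‖ / 2) ^ 2) := by ring
    _ ≤ 4 * (c * ‖p‖ ^ 2) := by gcongr
    _ ≤ 4 * (L * ‖w - p‖) := by linarith [hosc p hpD hp_norm]
    _ ≤ 4 * L * ‖z - w‖ := by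
      rw [mul_assoc, norm_sub_rev w p]
      gcongr
      linarith [norm_nonneg (z - p)]

theorem exists_forall_neg_of_norm_sub_le_mul_norm_sq (hc : 0 < c) (hρ : ContDiffAt ℝ 1 ρ 0)
    (hosc : ∃ r₀ > (0:ℝ), ∀ p ∈ frontier D, ‖p‖ < r₀ → c * ‖p‖ ^ 2 ≤ -ρ p)
    (hDG : ∃ r₁ > (0:ℝ), ∀ z ∈ closure D, ‖z‖ < r₁ → ρ z < 0 ∨ z = 0) :
    ∃ r > (0:ℝ), ∃ ε > (0:ℝ), ∀ z ∈ closure D, z ≠ 0 → ‖z‖ < r →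
      ∀ w, ‖w - z‖ ≤ ε * ‖z‖ ^ 2 → ρ w < 0 := by
  obtain ⟨r₀, hr₀, hosc⟩ := hosc
  obtain ⟨r₁, hr₁, hDG⟩ := hDG
  obtain ⟨L, t, ht, hlip⟩ := hρ.exists_lipschitzOnWith
  obtain ⟨r₂, hr₂, hball⟩ := Metric.mem_nhds_iff.mp ht
  set R := min (min r₀ r₁) r₂
  have hlipR : LipschitzOnWith L ρ (ball 0 R) :=
    hlip.mono ((ball_subset_ball (min_le_right _ _)).trans hball)
  have hoscR : ∀ p ∈ frontier D, ‖p‖ < R → c * ‖p‖ ^ 2 ≤ -ρ p := fun p hp hpR =>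
    hosc p hp (hpR.trans_le ((min_le_left _ _).trans (min_le_left _ _)))
  have hDGR : ∀ z ∈ closure D, ‖z‖ < R → z ∈ {z | ρ z < 0} ∪ {0} := fun z hz hzR =>
    hDG z hz (hzR.trans_le ((min_le_left _ _).trans (min_le_right _ _)))
  set ε := c / (8 * (L + 1))
  have hε : 0 < ε := by positivity
  have hεL : 4 * L * ε < c := by
    have h8 : ε * (8 * (L + 1)) = c := div_mul_cancel₀ _ (by positivity)
    nlinarith [mul_nonneg L.coe_nonneg hε.le]
  refine ⟨min (2 * R / 3) (1 / (2 * ε)), by positivity, ε, hε, fun z hz hz0 hzr w hwz => ?_⟩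
  obtain ⟨hzR, hzε⟩ := lt_min_iff.mp hzr
  rw [lt_div_iff₀ (by positivity)] at hzε
  have hz_pos : 0 < ‖z‖ := norm_pos_iff.mpr hz0
  rw [norm_sub_rev] at hwz
  by_contra! hw
  rcases lt_or_ge ‖z - w‖ (‖z‖ / 2) with hnear | hfar
  · have := mul_norm_sq_le_mul_norm_sub_of_osculating hc.le hlipR hoscR hDGR hz (by linarith) hw hnear
    have : 4 * L * ‖z - w‖ ≤ 4 * L * ε * ‖z‖ ^ 2 := by
      rw [mul_assoc _ ε]; gcongr
    nlinarith [pow_pos hz_pos 2]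
  · nlinarith

end Osculation

theorem norm_sub_le_two_mul_norm_pow_three {𝕜 : Type*} [NormedField 𝕜] {w z M : 𝕜} {K : ℝ}
    {N : ℕ} (hN : 3 ≤ N) (hM : ‖M‖ ≤ 1) (hK : K ≤ 1) (hz : ‖z‖ ≤ 1)
    (hw : ‖w - z - M * z ^ N‖ ≤ K * ‖z‖ ^ (N + 1)) : ‖w - z‖ ≤ 2 * ‖z‖ ^ 3 := by
  have hzN : ‖z‖ ^ N ≤ ‖z‖ ^ 3 := pow_le_pow_of_le_one (norm_nonneg z) hz hN
  have hzN1 : ‖z‖ ^ (N + 1) ≤ ‖z‖ ^ N := pow_le_pow_of_le_one (norm_nonneg z) hz N.le_succ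
  have hrem : K * ‖z‖ ^ (N + 1) ≤ ‖z‖ ^ (N + 1) := mul_le_of_le_one_left (by positivity) hK
  have hlead : ‖M‖ * ‖z‖ ^ N ≤ ‖z‖ ^ N := mul_le_of_le_one_left (by positivity) hM
  calc ‖w - z‖ ≤ ‖w - z - M * z ^ N‖ + ‖M‖ * ‖z‖ ^ N := by
        simpa [norm_mul, norm_pow] using norm_sub_le_norm_sub_add_norm_sub (w - z) (M * z ^ N) 0
    _ ≤ 2 * ‖z‖ ^ 3 := by linarith

theorem stmt17_general (G D : Set ℂ) (ρ : ℂ → ℝ) (hG : G = {z | ρ z < 0})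
    (hρ : ContDiff ℝ 1 ρ)
    (c : ℝ) (hc : 0 < c)
    (hosc : ∃ r₀ > (0:ℝ), ∀ z ∈ frontier D, ‖z‖ < r₀ → c * ‖z‖ ^ 2 ≤ -ρ z)
    (hDG : ∃ r₁ > (0:ℝ), ∀ z ∈ closure D, ‖z‖ < r₁ → z ∈ G ∪ {0})
    (N : ℕ) (hN : 2 < N) :
    ∃ δ > (0:ℝ), ∀ (β : ℂ → ℂ) (M : ℂ) (K rβ : ℝ), 0 < rβ →
      DifferentiableOn ℂ β (Metric.ball 0 rβ) →
      (∀ z ∈ Metric.ball (0:ℂ) rβ, ‖β z - z - M * z ^ N‖ ≤ K * ‖z‖ ^ (N + 1)) →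
      ‖M‖ < δ → K < δ →
      ∃ U₁ : Set ℂ, IsOpen U₁ ∧ (0:ℂ) ∈ U₁ ∧
        β '' (closure D ∩ U₁) ⊆ G ∪ {0} := by
  subst hG
  obtain ⟨r, hr, ε, hε, hmem⟩ :=
    exists_forall_neg_of_norm_sub_le_mul_norm_sq hc hρ.contDiffAt hosc hDG
  refine ⟨1, one_pos, fun β M K rβ hrβ _ hβ hM hK => ?_⟩
  refine ⟨ball 0 (min (min rβ r) (min 1 (ε / 2))), isOpen_ball, mem_ball_self (by positivity), ?_⟩
  rintro _ ⟨z, ⟨hzD, hzr⟩, rfl⟩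
  rw [mem_ball_zero_iff, lt_min_iff, lt_min_iff, lt_min_iff] at hzr
  obtain ⟨⟨hzβ, hzr⟩, hz1, hzε⟩ := hzr
  have hβz := hβ z (mem_ball_zero_iff.mpr hzβ)
  rcases eq_or_ne z 0 with rfl | hz0
  · right
    simpa [zero_pow (by omega : N ≠ 0), sub_eq_zero] using hβz
  · left
    refine hmem z hzD hz0 hzr (β z) ?_
    calc ‖β z - z‖ ≤ 2 * ‖z‖ * ‖z‖ ^ 2 :=
          (norm_sub_le_two_mul_norm_pow_three hN hM.le hK.le hz1.le hβz).trans_eq (by ring)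
      _ ≤ ε * ‖z‖ ^ 2 := by gcongr; linarith

/-- Let `G = {ρ < 0}` be a smoothly bounded simply connected domain in
`ℂ` with `0 ∈ ∂G`, and `D` a smoothly bounded domain with `0 ∈ ∂D`, such that near `0`
one has `D̄ ⊆ G ∪ {0}` and `−ρ(z) ≥ c|z|²` for `z ∈ ∂D` (i.e. `G` osculates `D` from
outside to second order at `0`).  If `β(z) = z + M z^N + O(z^{N+1})` is holomorphic near
`0` with `N > 2` and `|M|` and the remainder constant sufficiently small, then `β` maps
`D̄ ∩ U₁` into `G ∪ {0}` for a sufficiently small neighborhood `U₁` of `0`. -/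
theorem stmt17 (G D : Set ℂ) (ρ : ℂ → ℝ) (hG : G = {z | ρ z < 0})
    (hρ : ContDiff ℝ 1 ρ) (hGopen : IsOpen G) (hDopen : IsOpen D)
    (h0G : (0:ℂ) ∈ frontier G) (h0D : (0:ℂ) ∈ frontier D)
    (c : ℝ) (hc : 0 < c)
    (hosc : ∃ r₀ > (0:ℝ), ∀ z ∈ frontier D, ‖z‖ < r₀ → c * ‖z‖ ^ 2 ≤ -ρ z)
    (hDG : ∃ r₁ > (0:ℝ), ∀ z ∈ closure D, ‖z‖ < r₁ → z ∈ G ∪ {0})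
    (N : ℕ) (hN : 2 < N) :
    ∃ δ > (0:ℝ), ∀ (β : ℂ → ℂ) (M : ℂ) (K rβ : ℝ), 0 < rβ →
      DifferentiableOn ℂ β (Metric.ball 0 rβ) →
      (∀ z ∈ Metric.ball (0:ℂ) rβ, ‖β z - z - M * z ^ N‖ ≤ K * ‖z‖ ^ (N + 1)) →
      ‖M‖ < δ → K < δ →
      ∃ U₁ : Set ℂ, IsOpen U₁ ∧ (0:ℂ) ∈ U₁ ∧
        β '' (closure D ∩ U₁) ⊆ G ∪ {0} :=
  stmt17_general G D ρ hG hρ c hc hosc hDG N hN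
end
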